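/- arXiv:1004.5527 — 5 statements merged into one kernel-verified Lean document; each statement's English description precedes it below -/
import Mathlib

section
/- Let c ∈ ℤ^s be a primitive integer vector (the gcd of its coordinates is 1) with c ≠ 0. Then for any real X ≥ max_j |c_j|, the number of integer vectors x ∈ ℤ^s with max_j |x_j| ≤ X and c_1 x_1 + ... + c_s x_s = 0 is O(X^{s-1} / max_j |c_j|), with implied constant depending only on s. -/
open scoped BigOperators

lemma bezout_finset {ι : Type*} [DecidableEq ι] (t : Finset ι) (f : ι → ℤ) :
    ∃ g : ι → ℤ, ∑ i ∈ t, f i * g i = t.gcd f := by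
  induction t using Finset.induction_on with
  | empty => exact ⟨0, by simp⟩
  | @insert a t ha ih =>
    obtain ⟨g, hg⟩ := ih
    refine ⟨Function.update (fun i => Int.gcdB (f a) (t.gcd f) * g i) a
      (Int.gcdA (f a) (t.gcd f)), ?_⟩
    rw [Finset.sum_insert ha, Finset.gcd_insert, ← Int.coe_gcd, Int.gcd_eq_gcd_ab,
      Function.update_self]
    have h2 : ∀ i ∈ t, f i * Function.update (fun i => Int.gcdB (f a) (t.gcd f) * g i) a
        (Int.gcdA (f a) (t.gcd f)) i = Int.gcdB (f a) (t.gcd f) * (f i * g i) := by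
      intro i hi
      rw [Function.update_of_ne (by rintro rfl; exact ha hi)]
      ring
    rw [Finset.sum_congr rfl h2, ← Finset.mul_sum, hg]
    ring

/-- Heath-Brown's lattice point bound: for a primitive nonzero integer vector `c`,
the number of integer points `x` with `|x| ≤ X` on the hyperplane `c · x = 0`
is `O(X^(s-1) / |c|)`, uniformly for `X ≥ |c| = max |c_j|`. -/
theorem stmt_0 (s : ℕ) (hs : 0 < s) :
    ∃ C : ℝ, 0 < C ∧ ∀ c : Fin s → ℤ, c ≠ 0 →
      (Finset.univ.gcd c = 1) →
      ∀ X : ℝ, ((Finset.univ.sup fun j => (c j).natAbs : ℕ) : ℝ) ≤ X →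
      (Nat.card {x : Fin s → ℤ | (∀ j, (|x j| : ℝ) ≤ X) ∧ ∑ j, c j * x j = 0} : ℝ)
        ≤ C * X ^ (s - 1) / ((Finset.univ.sup fun j => (c j).natAbs : ℕ) : ℝ) := by
  refine ⟨3 ^ s, by positivity, ?_⟩
  intro c hc hgcd X hX
  set m : ℕ := Finset.univ.sup fun j => (c j).natAbs with hm
  haveI : Nonempty (Fin s) := ⟨⟨0, hs⟩⟩
  obtain ⟨j0, -, hj0⟩ := Finset.exists_mem_eq_sup Finset.univ Finset.univ_nonempty
    fun j => (c j).natAbs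
  have hmpos : 0 < m := by
    obtain ⟨j, hj⟩ := Function.ne_iff.mp hc
    exact lt_of_lt_of_le (Int.natAbs_pos.mpr hj) (Finset.le_sup (f := fun j => (c j).natAbs) (Finset.mem_univ j))
  haveI : NeZero m := ⟨hmpos.ne'⟩
  have hcj0 : c j0 ≠ 0 := by
    intro h
    rw [← hm] at hj0
    rw [h] at hj0
    simp at hj0
    omega
  have hmdvd : (m : ℤ) ∣ c j0 := by
    rw [← hm] at hj0
    rw [hj0]
    exact Int.natAbs_dvd.mpr dvd_rfl
  have hmR : (0:ℝ) < m := by exact_mod_cast hmpos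
  have hX1 : (1:ℝ) ≤ X := le_trans (by exact_mod_cast hmpos) hX
  set B : ℤ := ⌊X⌋ with hB
  have hB1 : 1 ≤ B := Int.le_floor.mpr (by exact_mod_cast hX1)
  have hBX : (B:ℝ) ≤ X := Int.floor_le X
  have hmZ : (0:ℤ) < (m:ℤ) := by exact_mod_cast hmpos
  set Q : ℕ := (2 * B / (m:ℤ)).toNat with hQ
  -- the hom and its kernel
  let φ : ({j : Fin s // j ≠ j0} → ZMod m) →+ ZMod m :=
    { toFun := fun r => ∑ j, (c j.1 : ZMod m) * r j
      map_zero' := by simp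
      map_add' := fun r r' => by
        simp only [Pi.add_apply, mul_add]
        rw [Finset.sum_add_distrib] }
  have hφ : ∀ r, φ r = ∑ j, (c j.1 : ZMod m) * r j := fun r => rfl
  have hc0 : ((c j0 : ℤ) : ZMod m) = 0 := (ZMod.intCast_zmod_eq_zero_iff_dvd _ _).mpr hmdvd
  -- surjectivity
  obtain ⟨g, hg⟩ := bezout_finset Finset.univ c
  rw [hgcd] at hg
  have hone : ∑ j : {j : Fin s // j ≠ j0}, (c j.1 : ZMod m) * ((g j.1 : ℤ) : ZMod m) = 1 := by
    have h1 : ((∑ i : Fin s, c i * g i : ℤ) : ZMod m) = ((1 : ℤ) : ZMod m) := by rw [hg]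
    push_cast at h1
    rw [← Finset.sum_erase_add _ _ (Finset.mem_univ j0), hc0, zero_mul, add_zero] at h1
    rw [Finset.sum_subtype (p := fun j => j ≠ j0) (Finset.univ.erase j0) (fun x => by simp)
      (fun j => (c j : ZMod m) * ((g j : ℤ) : ZMod m))] at h1
    exact h1
  have hsurj : Function.Surjective φ := by
    intro u
    refine ⟨fun j => u * ((g j.1 : ℤ) : ZMod m), ?_⟩
    rw [hφ]
    calc ∑ j : {j : Fin s // j ≠ j0}, (c j.1 : ZMod m) * (u * ((g j.1 : ℤ) : ZMod m))
        = u * ∑ j : {j : Fin s // j ≠ j0}, (c j.1 : ZMod m) * ((g j.1 : ℤ) : ZMod m) := by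
          rw [Finset.mul_sum]; exact Finset.sum_congr rfl fun j _ => by ring
      _ = u := by rw [hone, mul_one]
  have hcard_sub : Fintype.card {j : Fin s // j ≠ j0} = s - 1 := by
    have := Fintype.card_subtype_compl (fun j : Fin s => j = j0)
    simpa [Fintype.card_subtype_eq] using this
  have hcard_dom : Nat.card ({j : Fin s // j ≠ j0} → ZMod m) = m ^ (s - 1) := by
    rw [Nat.card_eq_fintype_card, Fintype.card_fun, ZMod.card, hcard_sub]
  have hker : Nat.card φ.ker * m = m ^ (s - 1) := by
    have h1 := AddSubgroup.card_eq_card_quotient_mul_card_addSubgroup φ.ker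
    rw [Nat.card_congr (QuotientAddGroup.quotientKerEquivOfSurjective φ hsurj).toEquiv,
      Nat.card_zmod, hcard_dom] at h1
    rw [Nat.mul_comm] at h1
    omega
  -- the injection
  set S : Set (Fin s → ℤ) :=
    {x : Fin s → ℤ | (∀ j, (|x j| : ℝ) ≤ X) ∧ ∑ j, c j * x j = 0} with hS
  have hbnd : ∀ x : ↥S, ∀ j : Fin s, -B ≤ x.1 j ∧ x.1 j ≤ B := by
    intro x j
    have h1 := x.2.1 j
    rw [abs_le] at h1
    constructor
    · have : -x.1 j ≤ B := Int.le_floor.mpr (by push_cast; linarith)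
      omega
    · exact Int.le_floor.mpr (by push_cast; exact h1.2)
  have hq : ∀ x : ↥S, ∀ j : Fin s, ((x.1 j + B) / (m:ℤ)).toNat < Q + 1 := by
    intro x j
    rw [Nat.lt_succ_iff, hQ]
    exact Int.toNat_le_toNat (Int.ediv_le_ediv hmZ (by have := (hbnd x j).2; omega))
  have hkmem : ∀ x : ↥S, (fun j : {j : Fin s // j ≠ j0} => ((x.1 j.1 : ℤ) : ZMod m)) ∈ φ.ker := by
    intro x
    rw [AddMonoidHom.mem_ker, hφ]
    have h1 : ((∑ i : Fin s, c i * x.1 i : ℤ) : ZMod m) = ((0 : ℤ) : ZMod m) := by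
      rw [x.2.2]
    push_cast at h1
    rw [← Finset.sum_erase_add _ _ (Finset.mem_univ j0), hc0, zero_mul, add_zero] at h1
    rw [Finset.sum_subtype (p := fun j => j ≠ j0) (Finset.univ.erase j0) (fun x => by simp)
      (fun j => (c j : ZMod m) * ((x.1 j : ℤ) : ZMod m))] at h1
    exact h1
  have key : Nat.card ↥S ≤ (Q + 1) ^ (s - 1) * Nat.card φ.ker := by
    have hT : Nat.card (({j : Fin s // j ≠ j0} → Fin (Q+1)) × φ.ker)
        = (Q + 1) ^ (s - 1) * Nat.card φ.ker := by
      rw [Nat.card_prod]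
      congr 1
      rw [Nat.card_eq_fintype_card, Fintype.card_fun, Fintype.card_fin, hcard_sub]
    rw [← hT]
    refine Nat.card_le_card_of_injective
      (fun x => (fun j => ⟨((x.1 j.1 + B) / (m:ℤ)).toNat, hq x j.1⟩, ⟨_, hkmem x⟩)) ?_
    intro x y hxy
    have h1 := congrArg Prod.fst hxy
    have h2 := congrArg Prod.snd hxy
    simp only at h1 h2
    have hcoord : ∀ j : Fin s, j ≠ j0 → x.1 j = y.1 j := by
      intro j hj
      have hq1 : ((x.1 j + B) / (m:ℤ)).toNat = ((y.1 j + B) / (m:ℤ)).toNat := by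
        have := congrFun h1 ⟨j, hj⟩
        exact Fin.mk.inj_iff.mp this
      have hdivnn1 : 0 ≤ (x.1 j + B) / (m:ℤ) :=
        Int.ediv_nonneg (by have := (hbnd x j).1; omega) hmZ.le
      have hdivnn2 : 0 ≤ (y.1 j + B) / (m:ℤ) :=
        Int.ediv_nonneg (by have := (hbnd y j).1; omega) hmZ.le
      have hdiv : (x.1 j + B) / (m:ℤ) = (y.1 j + B) / (m:ℤ) := by omega
      have hr : ((x.1 j : ℤ) : ZMod m) = ((y.1 j : ℤ) : ZMod m) := by
        have := congrFun (Subtype.ext_iff.mp h2) ⟨j, hj⟩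
        exact this
      have hmod : (x.1 j + B) % (m:ℤ) = (y.1 j + B) % (m:ℤ) := by
        have := (ZMod.intCast_eq_intCast_iff _ _ _).mp hr
        exact Int.ModEq.add_right B this
      have e1 := Int.mul_ediv_add_emod (x.1 j + B) (m:ℤ)
      have e2 := Int.mul_ediv_add_emod (y.1 j + B) (m:ℤ)
      rw [hdiv, hmod] at e1
      omega
    apply Subtype.ext
    funext j
    by_cases hj : j = j0
    · subst hj
      have hsum : ∑ i : Fin s, c i * x.1 i = ∑ i : Fin s, c i * y.1 i := by
        rw [x.2.2, y.2.2]
      rw [← Finset.sum_erase_add _ _ (Finset.mem_univ j),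
        ← Finset.sum_erase_add _ _ (Finset.mem_univ j)] at hsum
      have hrest : ∑ i ∈ Finset.univ.erase j, c i * x.1 i
          = ∑ i ∈ Finset.univ.erase j, c i * y.1 i :=
        Finset.sum_congr rfl fun i hi => by
          rw [hcoord i (Finset.mem_erase.mp hi).1]
      rw [hrest] at hsum
      exact mul_left_cancel₀ hcj0 (add_left_cancel hsum)
    · exact hcoord j hj
  -- arithmetic conclusion
  have keynat : Nat.card ↥S * m ≤ ((Q + 1) * m) ^ (s - 1) := by
    calc Nat.card ↥S * m ≤ ((Q + 1) ^ (s - 1) * Nat.card φ.ker) * m :=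
          Nat.mul_le_mul_right _ key
      _ = (Q + 1) ^ (s - 1) * (Nat.card φ.ker * m) := by ring
      _ = (Q + 1) ^ (s - 1) * m ^ (s - 1) := by rw [hker]
      _ = ((Q + 1) * m) ^ (s - 1) := (mul_pow _ _ _).symm
  have hQm : (((Q + 1) * m : ℕ) : ℝ) ≤ 3 * X := by
    have h1 : ((Q:ℤ)) * m ≤ 2 * B := by
      rw [hQ, Int.toNat_of_nonneg (Int.ediv_nonneg (by omega) hmZ.le)]
      exact Int.ediv_mul_le _ hmZ.ne'
    have h1R : ((Q:ℝ)) * m ≤ 2 * B := by exact_mod_cast h1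
    have hmX : (m:ℝ) ≤ X := hX
    push_cast
    nlinarith
  rw [le_div_iff₀ hmR]
  calc (Nat.card ↥S : ℝ) * m = ((Nat.card ↥S * m : ℕ) : ℝ) := by push_cast; ring
    _ ≤ ((((Q + 1) * m) ^ (s - 1) : ℕ) : ℝ) := by exact_mod_cast keynat
    _ = (((Q + 1) * m : ℕ) : ℝ) ^ (s - 1) := by push_cast; ring
    _ ≤ (3 * X) ^ (s - 1) := pow_le_pow_left₀ (by positivity) hQm _
    _ = 3 ^ (s - 1) * X ^ (s - 1) := mul_pow _ _ _
    _ ≤ 3 ^ s * X ^ (s - 1) := by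
        have : (3:ℝ) ^ (s - 1) ≤ 3 ^ s := pow_le_pow_right₀ (by norm_num) (Nat.sub_le s 1)
        have hXp : (0:ℝ) ≤ X ^ (s - 1) := by positivity
        nlinarith
end

section
/- Let k ≥ 2. For β ∈ ℝ and B > 0, let v(β,B) = ∫_{-B}^{B} e(β ξ^k) dξ, where e(z) = exp(2πiz). Then |v(β,B)| ≪ B(1 + B^k|β|)^{-1/k}, with implied constant depending only on k. -/
/-!
Split `[-B, B]` at `0`; after `ξ ↦ -ξ` both halves are integrals `∫₀^B e(β ξ^k) dξ`. For any
`T > 0` with `|β| T^k ≥ 1`, the piece over `[0, T]` is at most `T`, and integration by parts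
against the nonincreasing weight `ξ^(1-k)` bounds the piece over `[T, B]` by
`T^(1-k) / (π k |β|) ≤ T`. With `t = B^k |β|`, take `T = 2B (1+t)^(-1/k)` when `t ≥ 1`; when
`t ≤ 1` the trivial bound `2B` already suffices.
-/

open Real

noncomputable def ee (z : ℝ) : ℂ := Complex.exp (2 * Real.pi * Complex.I * z)

noncomputable def vv (k : ℕ) (β B : ℝ) : ℂ := ∫ ξ in (-B)..B, ee (β * ξ ^ k)

open Set intervalIntegral Complex

theorem norm_ee (z : ℝ) : ‖ee z‖ = 1 := by
  simp [ee, Complex.norm_exp]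

theorem continuous_ee : Continuous ee := by
  unfold ee; fun_prop

theorem hasDerivAt_ee (z : ℝ) : HasDerivAt ee (2 * π * I * ee z) z := by
  have := (((hasDerivAt_id (z : ℂ)).const_mul (2 * π * I)).cexp).comp_ofReal
  simp only [id, mul_one] at this
  exact this.congr_deriv (by rw [ee]; ring)

theorem hasDerivAt_ee_mul_pow (β : ℝ) (k : ℕ) (x : ℝ) :
    HasDerivAt (fun x => ee (β * x ^ k)) (2 * π * I * β * k * x ^ (k - 1) * ee (β * x ^ k)) x := by
  have := (hasDerivAt_ee _).scomp x ((hasDerivAt_pow k x).const_mul β)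
  rw [Complex.real_smul] at this
  exact this.congr_deriv (by push_cast; ring)

theorem norm_integral_smul_deriv_le {E : Type*} [NormedAddCommGroup E] [NormedSpace ℝ E]
    [CompleteSpace E] {u u' : ℝ → ℝ} {v v' : ℝ → E} {a b M : ℝ} (hab : a ≤ b)
    (hu : ∀ x ∈ uIcc a b, HasDerivAt u (u' x) x) (hv : ∀ x ∈ uIcc a b, HasDerivAt v (v' x) x)
    (hu' : IntervalIntegrable u' MeasureTheory.volume a b)
    (hv' : IntervalIntegrable v' MeasureTheory.volume a b)
    (hu'_nonpos : ∀ x ∈ Icc a b, u' x ≤ 0) (hub : 0 ≤ u b) (hvM : ∀ x ∈ Icc a b, ‖v x‖ ≤ M) :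
    ‖∫ x in a..b, u x • v' x‖ ≤ 2 * M * u a := by
  have hM : 0 ≤ M := (norm_nonneg _).trans (hvM a (left_mem_Icc.mpr hab))
  have hdrop : ∫ x in a..b, -u' x = u a - u b := by
    rw [integral_neg, integral_eq_sub_of_hasDerivAt hu hu']; ring
  have hua : 0 ≤ u a := by
    have : 0 ≤ ∫ x in a..b, -u' x :=
      integral_nonneg hab fun x hx => neg_nonneg.mpr (hu'_nonpos x hx)
    linarith
  have hrest : ‖∫ x in a..b, u' x • v x‖ ≤ (u a - u b) * M := by
    rw [← hdrop, ← integral_mul_const]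
    refine norm_integral_le_of_norm_le hab (MeasureTheory.ae_of_all _ fun x hx => ?_)
      (hu'.neg.mul_const M)
    have hx : x ∈ Icc a b := Ioc_subset_Icc_self hx
    rw [norm_smul, Real.norm_of_nonpos (hu'_nonpos x hx)]
    exact mul_le_mul_of_nonneg_left (hvM x hx) (neg_nonneg.mpr (hu'_nonpos x hx))
  have hend : ∀ x ∈ Icc a b, 0 ≤ u x → ‖u x • v x‖ ≤ u x * M := fun x hx hx0 => by
    rw [norm_smul, Real.norm_of_nonneg hx0]
    exact mul_le_mul_of_nonneg_left (hvM x hx) hx0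
  rw [integral_smul_deriv_eq_deriv_smul hu hv hu' hv']
  calc ‖u b • v b - u a • v a - ∫ x in a..b, u' x • v x‖
      ≤ ‖u b • v b‖ + ‖u a • v a‖ + ‖∫ x in a..b, u' x • v x‖ :=
        (norm_sub_le _ _).trans (by gcongr; exact norm_sub_le _ _)
    _ ≤ u b * M + u a * M + (u a - u b) * M := by
      gcongr
      · exact hend b (right_mem_Icc.mpr hab) hub
      · exact hend a (left_mem_Icc.mpr hab) hua
    _ = 2 * M * u a := by ring

theorem norm_integral_ee_mul_pow_le {k : ℕ} (hk : 1 ≤ k) {β a b : ℝ} (hβ : β ≠ 0) (ha : 0 < a)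
    (hab : a ≤ b) : ‖∫ x in a..b, ee (β * x ^ k)‖ ≤ a ^ (1 - k : ℤ) / (π * k * |β|) := by
  have hpos : ∀ x ∈ uIcc a b, 0 < x := fun x hx => ha.trans_le (uIcc_of_le hab ▸ hx).1
  have hk0 : (k : ℂ) ≠ 0 := Nat.cast_ne_zero.mpr (by omega)
  have hβ0 : (β : ℂ) ≠ 0 := ofReal_ne_zero.mpr hβ
  set c : ℂ := (2 * π * I * β * k)⁻¹ with hc
  have hu : ∀ x ∈ uIcc a b, HasDerivAt (fun x : ℝ => x ^ (1 - k : ℤ))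
      (((1 - k : ℤ) : ℝ) * x ^ ((1 - k : ℤ) - 1)) x := fun x hx =>
    hasDerivAt_zpow _ x (Or.inl (hpos x hx).ne')
  have hv : ∀ x ∈ uIcc a b, HasDerivAt (fun x => c * ee (β * x ^ k))
      ((x : ℂ) ^ (k - 1) * ee (β * x ^ k)) x := fun x _ => by
    refine ((hasDerivAt_ee_mul_pow β k x).const_mul c).congr_deriv ?_
    rw [hc]; field_simp
  have hu'_int : IntervalIntegrable (fun x : ℝ => ((1 - k : ℤ) : ℝ) * x ^ ((1 - k : ℤ) - 1))
      MeasureTheory.volume a b :=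
    (continuousOn_const.mul ((continuousOn_zpow₀ _).mono fun x hx => (hpos x hx).ne'))
      |>.intervalIntegrable
  have hv'_int : IntervalIntegrable (fun x : ℝ => (x : ℂ) ^ (k - 1) * ee (β * x ^ k))
      MeasureTheory.volume a b :=
    ((by fun_prop : Continuous fun x : ℝ => (x : ℂ) ^ (k - 1)).mul
      (continuous_ee.comp (by fun_prop))).intervalIntegrable _ _
  have hu'_nonpos : ∀ x ∈ Icc a b, ((1 - k : ℤ) : ℝ) * x ^ ((1 - k : ℤ) - 1) ≤ 0 := by
    intro x hx
    have : ((1 - k : ℤ) : ℝ) ≤ 0 := by push_cast; linarith [(Nat.one_le_cast (α := ℝ)).mpr hk]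
    exact mul_nonpos_of_nonpos_of_nonneg this (zpow_nonneg (ha.le.trans hx.1) _)
  have key := norm_integral_smul_deriv_le hab hu hv hu'_int hv'_int hu'_nonpos
    (zpow_nonneg (ha.le.trans hab) _) fun x _ => (by rw [norm_mul, norm_ee, mul_one])
  have hintegrand : ∀ x ∈ uIcc a b,
      x ^ (1 - k : ℤ) • ((x : ℂ) ^ (k - 1) * ee (β * x ^ k)) = ee (β * x ^ k) := fun x hx => by
    rw [Complex.real_smul, ← mul_assoc, ← ofReal_pow, ← ofReal_mul, ← zpow_natCast,
      ← zpow_add₀ (hpos x hx).ne', Nat.cast_sub hk]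
    simp
  have hc_norm : ‖c‖ = (2 * π * k * |β|)⁻¹ := by
    simp [hc, abs_of_pos pi_pos]; ring
  rw [integral_congr hintegrand, hc_norm] at key
  calc _ ≤ 2 * (2 * π * k * |β|)⁻¹ * a ^ (1 - k : ℤ) := key
    _ = a ^ (1 - k : ℤ) / (π * k * |β|) := by field_simp

theorem norm_integral_ee_le (f : ℝ → ℝ) (a b : ℝ) : ‖∫ x in a..b, ee (f x)‖ ≤ |b - a| := by
  simpa using norm_integral_le_of_norm_le_const (C := 1) fun x _ => (norm_ee (f x)).le

theorem intervalIntegrable_ee_mul_pow (β : ℝ) (k : ℕ) (a b : ℝ) :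
    IntervalIntegrable (fun x => ee (β * x ^ k)) MeasureTheory.volume a b :=
  (continuous_ee.comp (by fun_prop)).intervalIntegrable a b

theorem norm_integral_zero_ee_mul_pow_le {k : ℕ} (hk : 1 ≤ k) {β B T : ℝ} (hB : 0 ≤ B)
    (hT : 0 < T) (h : 1 ≤ |β| * T ^ k) : ‖∫ x in 0..B, ee (β * x ^ k)‖ ≤ 2 * T := by
  rcases le_total B T with hBT | hTB
  · calc _ ≤ |B - 0| := norm_integral_ee_le _ _ _
      _ ≤ 2 * T := by rw [sub_zero, abs_of_nonneg hB]; linarith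
  have hβ : β ≠ 0 := by rintro rfl; simp at h; linarith
  have htail : T ^ (1 - k : ℤ) / (π * k * |β|) ≤ T := by
    rw [zpow_sub₀ hT.ne', zpow_one, zpow_natCast, div_div]
    refine div_le_self hT.le ?_
    have hπk : 1 ≤ π * k := by
      have : (1 : ℝ) ≤ k := by exact_mod_cast hk
      nlinarith [pi_gt_three]
    calc (1 : ℝ) ≤ (π * k) * (|β| * T ^ k) := one_le_mul_of_one_le_of_one_le hπk h
      _ = T ^ k * (π * k * |β|) := by ring
  rw [← integral_add_adjacent_intervals (intervalIntegrable_ee_mul_pow β k 0 T)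
    (intervalIntegrable_ee_mul_pow β k T B)]
  calc _ ≤ ‖∫ x in 0..T, ee (β * x ^ k)‖ + ‖∫ x in T..B, ee (β * x ^ k)‖ := norm_add_le _ _
    _ ≤ |T - 0| + T ^ (1 - k : ℤ) / (π * k * |β|) :=
      add_le_add (norm_integral_ee_le _ _ _) (norm_integral_ee_mul_pow_le hk hβ hT hTB)
    _ ≤ 2 * T := by rw [sub_zero, abs_of_pos hT]; linarith

theorem vv_eq_add (k : ℕ) (β B : ℝ) :
    vv k β B = (∫ x in 0..B, ee ((-1) ^ k * β * x ^ k)) + ∫ x in 0..B, ee (β * x ^ k) := by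
  have hneg : ∫ x in 0..B, ee ((-1) ^ k * β * x ^ k) = ∫ x in -B..0, ee (β * x ^ k) := by
    have := integral_comp_neg (a := 0) (b := B) fun x => ee (β * x ^ k)
    rw [neg_zero] at this
    rw [← this]
    refine integral_congr fun x _ => ?_
    simp only [neg_pow x k]
    congr 1; ring
  rw [hneg, integral_add_adjacent_intervals (intervalIntegrable_ee_mul_pow β k _ _)
    (intervalIntegrable_ee_mul_pow β k _ _), vv]

theorem norm_vv_le (k : ℕ) (β : ℝ) {B : ℝ} (hB : 0 ≤ B) : ‖vv k β B‖ ≤ 2 * B := by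
  calc _ ≤ |B - -B| := norm_integral_ee_le _ _ _
    _ = 2 * B := by rw [sub_neg_eq_add, abs_of_nonneg (by linarith)]; ring

theorem norm_vv_le_of_one_le {k : ℕ} (hk : 1 ≤ k) {β B T : ℝ} (hB : 0 ≤ B) (hT : 0 < T)
    (h : 1 ≤ |β| * T ^ k) : ‖vv k β B‖ ≤ 4 * T := by
  have h' : 1 ≤ |(-1) ^ k * β| * T ^ k := by simpa using h
  rw [vv_eq_add]
  calc _ ≤ 2 * T + 2 * T := (norm_add_le _ _).trans <| add_le_add
        (norm_integral_zero_ee_mul_pow_le hk hB hT h') (norm_integral_zero_ee_mul_pow_le hk hB hT h)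
    _ = 4 * T := by ring

/-- `|v(β,B)| ≪ B (1 + B^k |β|)^(-1/k)`, uniformly in `β ∈ ℝ`, `B > 0`. -/
theorem stmt_7 (k : ℕ) (hk : 2 ≤ k) :
    ∃ C : ℝ, 0 < C ∧ ∀ β B : ℝ, 0 < B →
      ‖vv k β B‖ ≤ C * B * (1 + B ^ k * |β|) ^ (-(1 : ℝ) / k) := by
  refine ⟨8, by norm_num, fun β B hB => ?_⟩
  set t := B ^ k * |β|
  have ht : 0 ≤ t := by positivity
  set s := (1 + t) ^ ((k : ℝ)⁻¹)
  have hs : 0 < s := by positivity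
  have hsk : s ^ k = 1 + t := rpow_inv_natCast_pow (by positivity) (by omega)
  have h2k : (2 : ℝ) ≤ 2 ^ k := le_self_pow₀ one_le_two (by omega)
  rw [neg_div, rpow_neg (by positivity), one_div]
  rcases le_total t 1 with ht1 | ht1
  · have hs2 : s ≤ 2 := by
      refine (pow_le_pow_iff_left₀ hs.le zero_le_two (by omega : k ≠ 0)).mp ?_
      rw [hsk]; linarith
    calc ‖vv k β B‖ ≤ 2 * B := norm_vv_le k β hB.le
      _ ≤ 8 * B * s⁻¹ := by rw [← div_eq_mul_inv, le_div_iff₀ hs]; nlinarith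
  · calc ‖vv k β B‖ ≤ 4 * (2 * B / s) := norm_vv_le_of_one_le (by omega) hB.le (by positivity) ?_
      _ = 8 * B * s⁻¹ := by ring
    rw [div_pow, mul_pow, hsk, ← mul_div_assoc, le_div_iff₀ (by positivity)]
    nlinarith [mul_le_mul_of_nonneg_right h2k ht]
end

section
/- Let k ≥ 2 and define the Gaussian sum S(q,r) = Σ_{x=1}^{q} e(r x^k / q) for q ∈ ℕ, r ∈ ℤ, and define T_a(q) = q^{-s} Σ_{r=1, (r,q)=1}^{q} S(q, a_1 r) ⋯ S(q, a_s r) for a ∈ (ℤ∖{0})^s. Then T_a is a multiplicative function of q: if (q_1, q_2) = 1 then T_a(q_1 q_2) = T_a(q_1) T_a(q_2). -/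
/-!
The Chinese remainder theorem identifies `ZMod (q₁ q₂)` with `ZMod q₁ × ZMod q₂`, and a Bézout
relation `u q₂ + v q₁ = 1` gives `e(n / q₁q₂) = e(u n / q₁) e(v n / q₂)`. Hence the Gaussian sum
factors as `S(q₁q₂, r) = S(q₁, u r) S(q₂, v r)`. Since `u` and `v` are units modulo `q₁` and `q₂`,
they are absorbed by the summation over the unit `r`, which itself splits over
`(ZMod q₁)ˣ × (ZMod q₂)ˣ`.
-/

open Real
open scoped BigOperators

/-- The Gaussian sum `S(q,r) = Σ_{x=1}^q e(r x^k / q)`. -/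
noncomputable def SS (k : ℕ) (q : ℕ) (r : ℤ) : ℂ :=
    ∑ x ∈ Finset.Icc 1 q, ee ((r : ℝ) * (x : ℝ) ^ k / q)

/-- `T_a(q) = q^{-s} Σ_{r=1, (r;q)=1}^q S(q,a_1 r) ⋯ S(q,a_s r)`. -/
noncomputable def TT (k s : ℕ) (a : Fin s → ℤ) (q : ℕ) : ℂ :=
    ((q : ℂ) ^ s)⁻¹ *
      ∑ r ∈ (Finset.Icc 1 q).filter (fun r => Nat.gcd r q = 1),
        ∏ j, SS k q (a j * r)

section ResidueSums

variable {M : Type*} [AddCommMonoid M]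

theorem sum_Icc_one_natCast_zmod (q : ℕ) [NeZero q] (G : ZMod q → M) :
    ∑ r ∈ Finset.Icc 1 q, G r = ∑ x : ZMod q, G x := by
  -- `(x - 1).val + 1` is the representative of `x` in `[1, q]`
  refine Finset.sum_nbij' (fun r => (r : ZMod q)) (fun x => (x - 1).val + 1) ?_ ?_ ?_ ?_ ?_
  · simp
  · intro x _
    simpa [Nat.one_le_iff_ne_zero, Nat.add_one_le_iff] using ZMod.val_lt (x - 1)
  · intro r hr
    obtain ⟨h1, h2⟩ := Finset.mem_Icc.mp hr
    obtain ⟨n, rfl⟩ := Nat.exists_eq_add_of_le' h1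
    simp [ZMod.val_natCast_of_lt (by omega : n < q)]
  · intro x _
    simp
  · intro r _
    rfl

theorem sum_units_eq_sum_filter_isUnit {R : Type*} [Monoid R] [Fintype R] [Fintype Rˣ]
    [DecidablePred (IsUnit : R → Prop)] (F : R → M) :
    ∑ u : Rˣ, F u = ∑ x ∈ Finset.univ.filter IsUnit, F x := by
  have : Finset.univ.filter IsUnit = Finset.univ.map ⟨((↑) : Rˣ → R), Units.val_injective⟩ := by
    ext x; simp [IsUnit]
  rw [this, Finset.sum_map]
  rfl

theorem sum_Icc_coprime_eq_sum_units (q : ℕ) [NeZero q] (F : ZMod q → M) :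
    ∑ r ∈ (Finset.Icc 1 q).filter (fun r => Nat.gcd r q = 1), F r = ∑ u : (ZMod q)ˣ, F u := by
  classical
  simp_rw [sum_units_eq_sum_filter_isUnit, Finset.sum_filter, ← ZMod.isUnit_iff_coprime]
  exact sum_Icc_one_natCast_zmod q (fun x => if IsUnit x then F x else 0)

end ResidueSums

theorem ee_intCast_div_natCast (m : ℤ) (q : ℕ) [NeZero q] :
    ee (m / q) = ZMod.stdAddChar (m : ZMod q) := by
  rw [ZMod.stdAddChar_coe, ee]
  push_cast
  ring_nf

noncomputable def expPowSum (k : ℕ) {q : ℕ} [NeZero q] (r : ZMod q) : ℂ :=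
  ∑ x : ZMod q, ZMod.stdAddChar (r * x ^ k)

theorem SS_eq_expPowSum (k q : ℕ) [NeZero q] (r : ℤ) : SS k q r = expPowSum k (r : ZMod q) := by
  rw [SS, expPowSum, ← sum_Icc_one_natCast_zmod]
  refine Finset.sum_congr rfl fun x _ => ?_
  simpa using ee_intCast_div_natCast (r * x ^ k) q

namespace ZMod

variable {q₁ q₂ : ℕ} [NeZero q₁] [NeZero q₂] (h : q₁.Coprime q₂)

theorem stdAddChar_eq_mul_chineseRemainder {u v : ℤ} (huv : u * q₂ + v * q₁ = 1)
    (n : ZMod (q₁ * q₂)) :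
    stdAddChar n =
      stdAddChar ((u : ZMod q₁) * (chineseRemainder h n).1) *
        stdAddChar ((v : ZMod q₂) * (chineseRemainder h n).2) := by
  obtain ⟨m, rfl⟩ := intCast_surjective n
  simp only [map_intCast, Prod.fst_intCast, Prod.snd_intCast, ← Int.cast_mul, stdAddChar_coe,
    ← Complex.exp_add]
  congr 1
  have hq₁ : (q₁ : ℂ) ≠ 0 := Nat.cast_ne_zero.mpr (NeZero.ne q₁)
  have hq₂ : (q₂ : ℂ) ≠ 0 := Nat.cast_ne_zero.mpr (NeZero.ne q₂)
  have huv' : (u : ℂ) * q₂ + v * q₁ = 1 := by exact_mod_cast huv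
  push_cast
  field_simp
  linear_combination (-(m : ℂ)) * huv'

variable {M : Type*} [CommSemiring M]

theorem sum_chineseRemainder (f₁ : ZMod q₁ → M) (f₂ : ZMod q₂ → M) :
    ∑ x : ZMod (q₁ * q₂), f₁ (chineseRemainder h x).1 * f₂ (chineseRemainder h x).2 =
      (∑ y, f₁ y) * ∑ z, f₂ z := by
  rw [Fintype.sum_mul_sum, ← Fintype.sum_prod_type']
  exact Fintype.sum_equiv (chineseRemainder h).toEquiv _ _ fun _ => rfl

theorem sum_units_chineseRemainder (f₁ : ZMod q₁ → M) (f₂ : ZMod q₂ → M) :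
    ∑ x : (ZMod (q₁ * q₂))ˣ, f₁ (chineseRemainder h x).1 * f₂ (chineseRemainder h x).2 =
      (∑ y : (ZMod q₁)ˣ, f₁ y) * ∑ z : (ZMod q₂)ˣ, f₂ z := by
  rw [Fintype.sum_mul_sum, ← Fintype.sum_prod_type']
  exact Fintype.sum_equiv
    ((Units.mapEquiv (chineseRemainder h).toMulEquiv).trans MulEquiv.prodUnits).toEquiv _ _
    fun _ => rfl

end ZMod

section Multiplicativity

variable {q₁ q₂ : ℕ} [NeZero q₁] [NeZero q₂]

theorem expPowSum_eq_mul_chineseRemainder (h : q₁.Coprime q₂) (k : ℕ) {u v : ℤ}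
    (huv : u * q₂ + v * q₁ = 1) (r : ZMod (q₁ * q₂)) :
    expPowSum k r = expPowSum k ((u : ZMod q₁) * (ZMod.chineseRemainder h r).1) *
      expPowSum k ((v : ZMod q₂) * (ZMod.chineseRemainder h r).2) := by
  simp only [expPowSum, ← ZMod.sum_chineseRemainder h]
  refine Finset.sum_congr rfl fun x _ => ?_
  simp only [ZMod.stdAddChar_eq_mul_chineseRemainder h huv, map_mul, map_pow, Prod.fst_mul,
    Prod.snd_mul, Prod.pow_fst, Prod.pow_snd, mul_assoc]

noncomputable def unitsExpPowSum (k s : ℕ) (a : Fin s → ℤ) (q : ℕ) [NeZero q] : ℂ :=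
  ∑ r : (ZMod q)ˣ, ∏ j, expPowSum k ((a j : ZMod q) * (r : ZMod q))

theorem unitsExpPowSum_mul (h : q₁.Coprime q₂) (k s : ℕ) (a : Fin s → ℤ) :
    unitsExpPowSum k s a (q₁ * q₂) = unitsExpPowSum k s a q₁ * unitsExpPowSum k s a q₂ := by
  obtain ⟨u, v, huv⟩ := Nat.isCoprime_iff_coprime.mpr h.symm
  have hu : (u : ZMod q₁) * q₂ = 1 := by
    simpa using congrArg (fun n : ℤ => (n : ZMod q₁)) huv
  have hv : (v : ZMod q₂) * q₁ = 1 := by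
    simpa using congrArg (fun n : ℤ => (n : ZMod q₂)) huv
  let U := Units.mkOfMulEqOne _ _ hu
  let V := Units.mkOfMulEqOne _ _ hv
  let f₁ (y : ZMod q₁) : ℂ := ∏ j, expPowSum k ((a j : ZMod q₁) * y)
  let f₂ (z : ZMod q₂) : ℂ := ∏ j, expPowSum k ((a j : ZMod q₂) * z)
  calc unitsExpPowSum k s a (q₁ * q₂)
      = ∑ r : (ZMod (q₁ * q₂))ˣ,
          f₁ (U * (ZMod.chineseRemainder h r).1) * f₂ (V * (ZMod.chineseRemainder h r).2) := by
        simp only [unitsExpPowSum, f₁, f₂, ← Finset.prod_mul_distrib]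
        refine Finset.sum_congr rfl fun r _ => Finset.prod_congr rfl fun j _ => ?_
        rw [expPowSum_eq_mul_chineseRemainder h k huv]
        simp only [map_mul, map_intCast, Prod.fst_mul, Prod.snd_mul, Prod.fst_intCast,
          Prod.snd_intCast, U, V, Units.val_mkOfMulEqOne, mul_left_comm]
    _ = (∑ y : (ZMod q₁)ˣ, f₁ (U * y)) * ∑ z : (ZMod q₂)ˣ, f₂ (V * z) :=
        ZMod.sum_units_chineseRemainder h (fun y => f₁ (U * y)) (fun z => f₂ (V * z))
    _ = unitsExpPowSum k s a q₁ * unitsExpPowSum k s a q₂ := by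
        simp only [← Units.val_mul]
        rw [(Group.mulLeft_bijective U).sum_comp fun y => f₁ y,
          (Group.mulLeft_bijective V).sum_comp fun z => f₂ z]
        rfl

end Multiplicativity

theorem TT_eq_unitsExpPowSum (k s : ℕ) (a : Fin s → ℤ) (q : ℕ) [NeZero q] :
    TT k s a q = ((q : ℂ) ^ s)⁻¹ * unitsExpPowSum k s a q := by
  rw [TT, unitsExpPowSum,
    ← sum_Icc_coprime_eq_sum_units q fun r => ∏ j, expPowSum k ((a j : ZMod q) * r)]
  simp only [SS_eq_expPowSum, Int.cast_mul, Int.cast_natCast]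

theorem TT_zero (k s : ℕ) (a : Fin s → ℤ) : TT k s a 0 = 0 := by
  simp [TT]

theorem stmt_13_general (k s : ℕ) (a : Fin s → ℤ)
    (q₁ q₂ : ℕ) (hcop : Nat.Coprime q₁ q₂) :
    TT k s a (q₁ * q₂) = TT k s a q₁ * TT k s a q₂ := by
  rcases eq_or_ne q₁ 0 with rfl | h₁
  · simp [TT_zero]
  rcases eq_or_ne q₂ 0 with rfl | h₂
  · simp [TT_zero]
  have := NeZero.mk h₁
  have := NeZero.mk h₂
  simp only [TT_eq_unitsExpPowSum, unitsExpPowSum_mul hcop, Nat.cast_mul, mul_pow, mul_inv]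
  ring

/-- `T_a` is multiplicative: `T_a(q₁ q₂) = T_a(q₁) T_a(q₂)` for coprime `q₁, q₂`. -/
theorem stmt_13 (k s : ℕ) (hk : 2 ≤ k) (a : Fin s → ℤ) (ha : ∀ j, a j ≠ 0)
    (q₁ q₂ : ℕ) (hq₁ : 0 < q₁) (hq₂ : 0 < q₂) (hcop : Nat.Coprime q₁ q₂) :
    TT k s a (q₁ * q₂) = TT k s a q₁ * TT k s a q₂ :=
  stmt_13_general k s a q₁ q₂ hcop
end

section
/- Let k ≥ 2 and let κ be the multiplicative function defined on prime powers by κ(p^{uk+v}) = p^{-u-1} for u ≥ 0 and 2 ≤ v ≤ k, and κ(p^{uk+1}) = k·p^{-u-1/2} for u ≥ 0, with κ(1)=1. Then for all primes p and integers 0 ≤ j ≤ l, one has p^j κ(p^j) ≤ k·p^l κ(p^l), and consequently Σ_{d|q} d·κ(d) ≪ q^{1+ε} κ(q) for every ε > 0, uniformly in q ∈ ℕ. -/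
open Real

/-!
Write `j = u k + v` with `0 ≤ v < k`. The prescribed values give `p^j κ(p^j) = c_j p^{E(j)}`, where
`E(j) = u (k - 1) + e(v)` with `e(0) = 0`, `e(1) = 1/2`, `e(v) = v - 1` for `v ≥ 2`, and `c_j = k`
if `v = 1`, `c_j = 1` otherwise. As `E` is nondecreasing and `1 ≤ c_j ≤ k`, the first claim
follows.

For the second, `q ↦ Σ_{d ∣ q} d κ(d)` is multiplicative and, by the first claim, is at most
`k (n + 1) p^n κ(p^n)` at `p^n`. It remains to bound `∏_{p^n ∥ q} k (n + 1) ≪_ε q^ε`: the factor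
at `p^n` is at most `p^{nε}` once `p^ε ≥ 2k`, and for the finitely many smaller primes it is at
most `M p^{nε}` for a constant `M`, by Bernoulli's inequality `1 + nδ ≤ (1 + δ)^n = 2^{nε}`.
-/

namespace ArithmeticFunction.IsMultiplicative

variable {R : Type*} [CommSemiring R] [PartialOrder R] [IsOrderedRing R] {f g : ArithmeticFunction R}

theorem apply_nonneg (hf : f.IsMultiplicative) (hf0 : ∀ p n : ℕ, p.Prime → 0 ≤ f (p ^ n))
    (n : ℕ) : 0 ≤ f n := by
  rcases eq_or_ne n 0 with rfl | hn
  · simp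
  rw [multiplicative_factorization f hf hn, Nat.prod_factorization_eq_prod_primeFactors]
  exact Finset.prod_nonneg fun p hp => hf0 p _ (Nat.prime_of_mem_primeFactors hp)

theorem apply_le_prod_mul_apply (hf : f.IsMultiplicative) (hg : g.IsMultiplicative)
    (c : ℕ → ℕ → R) (hf0 : ∀ p n : ℕ, p.Prime → 0 ≤ f (p ^ n))
    (hfg : ∀ p n : ℕ, p.Prime → f (p ^ n) ≤ c p n * g (p ^ n)) {q : ℕ} (hq : q ≠ 0) :
    f q ≤ (∏ p ∈ q.primeFactors, c p (q.factorization p)) * g q := by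
  rw [multiplicative_factorization f hf hq, multiplicative_factorization g hg hq,
    Nat.prod_factorization_eq_prod_primeFactors, Nat.prod_factorization_eq_prod_primeFactors,
    ← Finset.prod_mul_distrib]
  exact Finset.prod_le_prod (fun p hp => hf0 p _ (Nat.prime_of_mem_primeFactors hp))
    fun p hp => hfg p _ (Nat.prime_of_mem_primeFactors hp)

end ArithmeticFunction.IsMultiplicative

theorem ArithmeticFunction.coe_zeta_mul_apply_prime_pow_le {R : Type*} [CommSemiring R]
    [PartialOrder R] [IsOrderedRing R] {f : ArithmeticFunction R} {K : R} {p n : ℕ}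
    (hp : p.Prime) (hf : ∀ i ≤ n, f (p ^ i) ≤ K * f (p ^ n)) :
    (↑ArithmeticFunction.zeta * f) (p ^ n) ≤ K * (n + 1) * f (p ^ n) := by
  rw [ArithmeticFunction.coe_zeta_mul_apply, Nat.sum_divisors_prime_pow hp]
  calc ∑ i ∈ Finset.range (n + 1), f (p ^ i)
      ≤ ∑ _i ∈ Finset.range (n + 1), K * f (p ^ n) :=
        Finset.sum_le_sum fun i hi => hf i (Finset.mem_range_succ_iff.mp hi)
    _ = K * (n + 1) * f (p ^ n) := by
        rw [Finset.sum_const, Finset.card_range, nsmul_eq_mul]; push_cast; ring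

lemma Nat.exists_eq_mul_add_of_pos {k : ℕ} (hk : 0 < k) (j : ℕ) : ∃ u v, v < k ∧ j = u * k + v :=
  ⟨j / k, j % k, Nat.mod_lt j hk, (Nat.div_add_mod' j k).symm⟩

lemma prod_primeFactors_rpow_factorization_mul {q : ℕ} (hq : q ≠ 0) (ε : ℝ) :
    ∏ p ∈ q.primeFactors, (p : ℝ) ^ (q.factorization p * ε) = (q : ℝ) ^ ε := by
  have hqprod : (q : ℝ) = ∏ p ∈ q.primeFactors, (p : ℝ) ^ q.factorization p := by
    exact_mod_cast Nat.prod_primeFactors_pow_factorization hq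
  rw [hqprod, ← finsetProd_rpow _ _ fun p _ => by positivity]
  exact Finset.prod_congr rfl fun p _ => rpow_natCast_mul (by positivity) _ _

lemma exists_mul_succ_le_mul_rpow {K ε : ℝ} (hK : 0 ≤ K) (hε : 0 < ε) :
    ∃ M : ℝ, ∀ x : ℝ, 2 ≤ x → ∀ n : ℕ, K * (n + 1) ≤ M * x ^ (n * ε) := by
  set δ : ℝ := 2 ^ ε - 1
  have hδ : 0 < δ := sub_pos.mpr (one_lt_rpow (by norm_num) hε)
  refine ⟨K * (1 + δ⁻¹), fun x hx n => ?_⟩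
  have hn : (n : ℝ) + 1 ≤ (1 + δ⁻¹) * (1 + n * δ) := by
    have : (1 + δ⁻¹) * (1 + n * δ) = n + 1 + (n * δ + δ⁻¹) := by field_simp; ring
    rw [this]
    linarith [show 0 ≤ n * δ + δ⁻¹ by positivity]
  have hbern : 1 + n * δ ≤ x ^ (n * ε) :=
    calc 1 + n * δ ≤ (1 + δ) ^ n := one_add_mul_le_pow (by linarith) n
      _ = (2 : ℝ) ^ (n * ε) := by rw [add_sub_cancel, mul_comm, rpow_mul_natCast (by norm_num)]
      _ ≤ x ^ (n * ε) := by gcongr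
  calc K * (n + 1) ≤ K * ((1 + δ⁻¹) * (1 + n * δ)) := by gcongr
    _ ≤ K * ((1 + δ⁻¹) * x ^ (n * ε)) := by gcongr
    _ = K * (1 + δ⁻¹) * x ^ (n * ε) := by ring

lemma mul_succ_le_rpow {K ε x : ℝ} (hK : 1 ≤ K) (hx : 0 ≤ x) (hKx : 2 * K ≤ x ^ ε)
    {n : ℕ} (hn : 1 ≤ n) : K * (n + 1) ≤ x ^ (n * ε) := by
  have h2n : (n : ℝ) + 1 ≤ 2 ^ n := by exact_mod_cast Nat.lt_two_pow_self
  calc K * (n + 1) ≤ K ^ n * 2 ^ n := by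
        gcongr
        exact le_self_pow₀ hK (by omega)
    _ = (2 * K) ^ n := by ring
    _ ≤ (x ^ ε) ^ n := by gcongr
    _ = x ^ (n * ε) := by rw [mul_comm, rpow_mul_natCast hx]

lemma exists_prod_primeFactors_le_rpow {K ε : ℝ} (hK : 1 ≤ K) (hε : 0 < ε) :
    ∃ C : ℝ, 0 < C ∧ ∀ q : ℕ, q ≠ 0 →
      ∏ p ∈ q.primeFactors, K * (q.factorization p + 1) ≤ C * (q : ℝ) ^ ε := by
  obtain ⟨M, hM⟩ := exists_mul_succ_le_mul_rpow (K := K) (by linarith) hε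
  set M' := max M 1
  set P₀ := ⌈(2 * K) ^ ε⁻¹⌉₊
  have hlarge (p : ℕ) (hp : P₀ ≤ p) : 2 * K ≤ (p : ℝ) ^ ε := by
    have h2K : 0 ≤ 2 * K := by linarith
    calc 2 * K = ((2 * K) ^ ε⁻¹) ^ ε := by rw [← rpow_mul h2K, inv_mul_cancel₀ hε.ne', rpow_one]
      _ ≤ (p : ℝ) ^ ε := by
        gcongr
        exact (Nat.le_ceil _).trans (by exact_mod_cast hp)
  set w : ℕ → ℝ := fun p => if p < P₀ then M' else 1
  refine ⟨M' ^ P₀, by positivity, fun q hq => ?_⟩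
  have hfactor : ∀ p ∈ q.primeFactors,
      K * (q.factorization p + 1) ≤ w p * (p : ℝ) ^ (q.factorization p * ε) := by
    intro p hp
    have hp2 : (2 : ℝ) ≤ p := by exact_mod_cast (Nat.prime_of_mem_primeFactors hp).two_le
    have hν : 1 ≤ q.factorization p :=
      Nat.one_le_iff_ne_zero.mpr (Finsupp.mem_support_iff.mp (Nat.support_factorization q ▸ hp))
    by_cases hpP : p < P₀
    · simp only [w, if_pos hpP]
      exact (hM p hp2 _).trans (by gcongr; exact le_max_left M 1)
    · simp only [w, if_neg hpP, one_mul]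
      exact mul_succ_le_rpow hK (by positivity) (hlarge p (not_lt.mp hpP)) hν
  have hw : ∏ p ∈ q.primeFactors, w p ≤ M' ^ P₀ := by
    have hcard : (q.primeFactors.filter (· < P₀)).card ≤ P₀ :=
      (Finset.card_le_card fun p hp => Finset.mem_range.mpr (Finset.mem_filter.mp hp).2).trans
        (Finset.card_range P₀).le
    rw [← Finset.prod_filter, Finset.prod_const]
    exact pow_le_pow_right₀ (le_max_right M 1) hcard
  calc ∏ p ∈ q.primeFactors, K * (q.factorization p + 1)
      ≤ ∏ p ∈ q.primeFactors, w p * (p : ℝ) ^ (q.factorization p * ε) :=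
        Finset.prod_le_prod (fun p _ => by positivity) hfactor
    _ = (∏ p ∈ q.primeFactors, w p) * (q : ℝ) ^ ε := by rw [Finset.prod_mul_distrib, prod_primeFactors_rpow_factorization_mul hq]
    _ ≤ M' ^ P₀ * (q : ℝ) ^ ε := by gcongr

namespace Kappa

variable {k : ℕ} {κ : ℕ → ℝ} {p : ℕ}

noncomputable def residueExponent : ℕ → ℝ
  | 0 => 0
  | 1 => 1 / 2
  | v + 2 => v + 1

lemma residueExponent_le (v : ℕ) : residueExponent v ≤ v := by
  rcases v with _ | _ | v <;> norm_num [residueExponent]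

lemma residueExponent_le_succ (v : ℕ) : residueExponent v ≤ residueExponent (v + 1) := by
  rcases v with _ | _ | v <;> norm_num [residueExponent]

noncomputable def primePowExponent (k j : ℕ) : ℝ :=
  (j / k : ℕ) * ((k : ℝ) - 1) + residueExponent (j % k)

lemma primePowExponent_mul_add {v : ℕ} (u : ℕ) (hv : v < k) :
    primePowExponent k (u * k + v) = u * ((k : ℝ) - 1) + residueExponent v := by
  rw [primePowExponent, Nat.mul_add_mod_of_lt hv, mul_comm u,
    Nat.mul_add_div (by omega), Nat.div_eq_of_lt hv, add_zero]

lemma primePowExponent_monotone (hk : 0 < k) : Monotone (primePowExponent k) := by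
  refine monotone_nat_of_le_succ fun j => ?_
  obtain ⟨u, v, hv, rfl⟩ := Nat.exists_eq_mul_add_of_pos hk j
  rw [primePowExponent_mul_add u hv]
  rcases (show v + 1 ≤ k from hv).lt_or_eq with hv' | hv'
  · rw [add_assoc, primePowExponent_mul_add u hv']
    linarith [residueExponent_le_succ v]
  · have hk' : (k : ℝ) = v + 1 := by exact_mod_cast hv'.symm
    rw [show u * k + v + 1 = (u + 1) * k + 0 by rw [← hv']; ring,
      primePowExponent_mul_add (u + 1) hk, residueExponent, hk']
    push_cast
    linarith [residueExponent_le v]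

noncomputable def primePowCoeff (k j : ℕ) : ℝ := if j % k = 1 then k else 1

lemma one_le_primePowCoeff (hk : 1 ≤ k) (j : ℕ) : 1 ≤ primePowCoeff k j := by
  unfold primePowCoeff
  split_ifs <;> simp [hk]

lemma primePowCoeff_le (hk : 1 ≤ k) (j : ℕ) : primePowCoeff k j ≤ k := by
  unfold primePowCoeff
  split_ifs <;> simp [hk]

lemma pow_mul_apply_prime_pow (hk : 2 ≤ k) (hκ1 : κ 1 = 1)
    (hκv : ∀ p : ℕ, p.Prime → ∀ u v : ℕ, 2 ≤ v → v ≤ k →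
      κ (p ^ (u * k + v)) = (p : ℝ) ^ (-(u : ℝ) - 1))
    (hκ1' : ∀ p : ℕ, p.Prime → ∀ u : ℕ,
      κ (p ^ (u * k + 1)) = (k : ℝ) * (p : ℝ) ^ (-(u : ℝ) - 1 / 2))
    (hp : p.Prime) (j : ℕ) :
    (p : ℝ) ^ j * κ (p ^ j) =
      primePowCoeff k j * (p : ℝ) ^ primePowExponent k j := by
  have hp0 : (0 : ℝ) < p := by exact_mod_cast hp.pos
  have pow_mul_rpow (n : ℕ) (y : ℝ) : (p : ℝ) ^ n * (p : ℝ) ^ y = (p : ℝ) ^ ((n : ℝ) + y) := by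
    rw [← rpow_natCast, ← rpow_add hp0]
  obtain ⟨u, v, hv, rfl⟩ := Nat.exists_eq_mul_add_of_pos (show 0 < k by omega) j
  rw [primePowCoeff, primePowExponent_mul_add u hv, Nat.mul_add_mod_of_lt hv]
  match v, hv with
  | 0, _ =>
    rcases u with _ | u
    · simp [hκ1, residueExponent]
    · rw [show (u + 1) * k + 0 = u * k + k by ring, hκv p hp u k hk le_rfl, pow_mul_rpow]
      simp only [if_neg (by omega : ¬ 0 = 1), residueExponent, one_mul]
      congr 1
      push_cast
      ring
  | 1, _ =>
    rw [hκ1' p hp u, mul_left_comm, pow_mul_rpow, if_pos rfl, residueExponent]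
    congr 2
    push_cast
    ring
  | v + 2, hv =>
    rw [hκv p hp u (v + 2) (by omega) hv.le, pow_mul_rpow, if_neg (by omega), one_mul,
      residueExponent]
    congr 1
    push_cast
    ring

lemma pow_mul_apply_prime_pow_le (hk : 2 ≤ k) (hκ1 : κ 1 = 1)
    (hκv : ∀ p : ℕ, p.Prime → ∀ u v : ℕ, 2 ≤ v → v ≤ k →
      κ (p ^ (u * k + v)) = (p : ℝ) ^ (-(u : ℝ) - 1))
    (hκ1' : ∀ p : ℕ, p.Prime → ∀ u : ℕ,
      κ (p ^ (u * k + 1)) = (k : ℝ) * (p : ℝ) ^ (-(u : ℝ) - 1 / 2))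
    (hp : p.Prime) {j l : ℕ} (hjl : j ≤ l) :
    (p : ℝ) ^ j * κ (p ^ j) ≤ (k : ℝ) * (p : ℝ) ^ l * κ (p ^ l) := by
  have hp1 : (1 : ℝ) ≤ p := by exact_mod_cast hp.one_lt.le
  rw [mul_assoc, pow_mul_apply_prime_pow hk hκ1 hκv hκ1' hp j,
    pow_mul_apply_prime_pow hk hκ1 hκv hκ1' hp l]
  have hE := rpow_le_rpow_of_exponent_le hp1 (primePowExponent_monotone (show 0 < k by omega) hjl)
  calc primePowCoeff k j * (p : ℝ) ^ primePowExponent k j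
      ≤ k * (p : ℝ) ^ primePowExponent k l := by
        gcongr
        exact primePowCoeff_le (by omega) j
    _ ≤ k * (primePowCoeff k l * (p : ℝ) ^ primePowExponent k l) := by
        gcongr
        exact le_mul_of_one_le_left (by positivity) (one_le_primePowCoeff (by omega) l)

lemma apply_prime_pow_pos (hk : 2 ≤ k) (hκ1 : κ 1 = 1)
    (hκv : ∀ p : ℕ, p.Prime → ∀ u v : ℕ, 2 ≤ v → v ≤ k →
      κ (p ^ (u * k + v)) = (p : ℝ) ^ (-(u : ℝ) - 1))
    (hκ1' : ∀ p : ℕ, p.Prime → ∀ u : ℕ,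
      κ (p ^ (u * k + 1)) = (k : ℝ) * (p : ℝ) ^ (-(u : ℝ) - 1 / 2))
    (hp : p.Prime) (j : ℕ) : 0 < κ (p ^ j) := by
  have hp0 : (0 : ℝ) < p := by exact_mod_cast hp.pos
  have hform := pow_mul_apply_prime_pow hk hκ1 hκv hκ1' hp j
  have hc := one_le_primePowCoeff (show 1 ≤ k by omega) j
  have : 0 < (p : ℝ) ^ j * κ (p ^ j) := hform ▸ by positivity
  exact pos_of_mul_pos_right this (by positivity)

noncomputable def idMul (κ : ℕ → ℝ) : ArithmeticFunction ℝ := ⟨fun d => d * κ d, by simp⟩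

@[simp]
lemma idMul_apply (κ : ℕ → ℝ) (d : ℕ) : idMul κ d = d * κ d := rfl

lemma isMultiplicative_idMul (hκ1 : κ 1 = 1)
    (hmul : ∀ m n : ℕ, Nat.Coprime m n → κ (m * n) = κ m * κ n) :
    (idMul κ).IsMultiplicative :=
  ⟨by simp [hκ1], fun {m n} hmn => by simp only [idMul_apply, hmul m n hmn]; push_cast; ring⟩

end Kappa

open ArithmeticFunction Kappa in
open scoped ArithmeticFunction.zeta in
/-- For the multiplicative function `κ` with `κ(p^(uk+v)) = p^(-u-1)` (`2 ≤ v ≤ k`) and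
`κ(p^(uk+1)) = k p^(-u-1/2)`, one has `p^j κ(p^j) ≤ k p^l κ(p^l)` for `j ≤ l`, and
`Σ_{d|q} d κ(d) ≪ q^(1+ε) κ(q)`. -/
theorem stmt_14 (k : ℕ) (hk : 2 ≤ k) (κ : ℕ → ℝ)
    (hκ1 : κ 1 = 1)
    (hmul : ∀ m n : ℕ, Nat.Coprime m n → κ (m * n) = κ m * κ n)
    (hκv : ∀ p : ℕ, p.Prime → ∀ u v : ℕ, 2 ≤ v → v ≤ k →
      κ (p ^ (u * k + v)) = (p : ℝ) ^ (-(u : ℝ) - 1))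
    (hκ1' : ∀ p : ℕ, p.Prime → ∀ u : ℕ,
      κ (p ^ (u * k + 1)) = (k : ℝ) * (p : ℝ) ^ (-(u : ℝ) - 1 / 2)) :
    (∀ p : ℕ, p.Prime → ∀ j l : ℕ, j ≤ l →
      (p : ℝ) ^ j * κ (p ^ j) ≤ (k : ℝ) * (p : ℝ) ^ l * κ (p ^ l)) ∧
    ∀ ε : ℝ, 0 < ε → ∃ C : ℝ, 0 < C ∧ ∀ q : ℕ, 1 ≤ q →
      ∑ d ∈ q.divisors, (d : ℝ) * κ d ≤ C * (q : ℝ) ^ (1 + ε) * κ q := by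
  have hle : ∀ p : ℕ, p.Prime → ∀ j l : ℕ, j ≤ l →
      (p : ℝ) ^ j * κ (p ^ j) ≤ (k : ℝ) * (p : ℝ) ^ l * κ (p ^ l) :=
    fun p hp j l hjl => pow_mul_apply_prime_pow_le hk hκ1 hκv hκ1' hp hjl
  refine ⟨hle, fun ε hε => ?_⟩
  have hF := isMultiplicative_idMul hκ1 hmul
  have hF0 : ∀ p n : ℕ, p.Prime → 0 ≤ idMul κ (p ^ n) := fun p n hp =>
    mul_nonneg (by positivity) (apply_prime_pow_pos hk hκ1 hκv hκ1' hp n).le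
  have hS0 : ∀ p n : ℕ, p.Prime → 0 ≤ (ζ * idMul κ : ArithmeticFunction ℝ) (p ^ n) :=
    fun p n _ => by
      rw [coe_zeta_mul_apply]
      exact Finset.sum_nonneg fun d _ => hF.apply_nonneg hF0 d
  have hSle : ∀ p n : ℕ, p.Prime →
      (ζ * idMul κ : ArithmeticFunction ℝ) (p ^ n) ≤ k * (n + 1) * idMul κ (p ^ n) :=
    fun p n hp => coe_zeta_mul_apply_prime_pow_le hp fun i hi => by
      simpa [mul_assoc] using hle p hp i n hi
  obtain ⟨C, hC, hCq⟩ :=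
    exists_prod_primeFactors_le_rpow (K := k) (by exact_mod_cast (show 1 ≤ k by omega)) hε
  refine ⟨C, hC, fun q hq => ?_⟩
  calc ∑ d ∈ q.divisors, (d : ℝ) * κ d = (ζ * idMul κ : ArithmeticFunction ℝ) q :=
        (coe_zeta_mul_apply (f := idMul κ)).symm
    _ ≤ (∏ p ∈ q.primeFactors, (k : ℝ) * (q.factorization p + 1)) * idMul κ q :=
        (isMultiplicative_zeta.natCast.mul hF).apply_le_prod_mul_apply hF _ hS0 hSle (by omega)
    _ ≤ C * (q : ℝ) ^ ε * idMul κ q := by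
        gcongr
        exacts [hF.apply_nonneg hF0 q, hCq q (by omega)]
    _ = C * (q : ℝ) ^ (1 + ε) * κ q := by rw [rpow_add (by positivity), rpow_one, idMul_apply]; ring
end

section
/- For any real ν ≥ 1 and every ε > 0, the number of positive integers n ≤ X^ν whose squarefree kernel n* = ∏_{p|n} p satisfies n* ≤ X is O(X^{1+ε}), with implied constant depending on ν and ε. -/
open Real
open scoped BigOperators

/-!
Rankin's trick: for `0 < n ≤ Y` and `δ > 0` we have `1 ≤ (Y / n) ^ δ`, so the count is at most
`Y ^ δ * ∑ n ^ (-δ)`. Group the `n` by their kernel `r`: writing `n = r * m` with every prime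
factor of `m` dividing `r`, the Euler product over `p ∣ r` gives
`∑_{n* = r} n ^ (-δ) ≤ ∏_{p ∣ r} (p ^ δ - 1)⁻¹`. This is bounded independently of `r`, since
every factor with `p ^ δ ≥ 2` is at most `1`. There are at most `X` kernels, and `δ = ε / ν`
turns `Y ^ δ = X ^ (ν δ)` into `X ^ ε`.
-/

open Finset

theorem prod_le_pow_of_le_one_of_le {R : Type*} [CommSemiring R] [PartialOrder R]
    [IsOrderedRing R] {g : ℕ → R} {M : R} (hM : 1 ≤ M) {N : ℕ} (P : Finset ℕ)
    (hg0 : ∀ p ∈ P, 0 ≤ g p) (hgM : ∀ p ∈ P, g p ≤ M) (hg1 : ∀ p ∈ P, N ≤ p → g p ≤ 1) :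
    ∏ p ∈ P, g p ≤ M ^ N := by
  rw [← prod_filter_mul_prod_filter_not P (· < N)]
  calc (∏ p ∈ P with p < N, g p) * ∏ p ∈ P with ¬p < N, g p
      ≤ M ^ #{p ∈ P | p < N} * 1 := by
        refine mul_le_mul ?_ ?_ (prod_nonneg fun p hp => hg0 p (mem_filter.1 hp).1)
          (pow_nonneg (zero_le_one.trans hM) _)
        · rw [← prod_const]
          exact prod_le_prod (fun p hp => hg0 p (mem_filter.1 hp).1)
            fun p hp => hgM p (mem_filter.1 hp).1
        · exact prod_le_one (fun p hp => hg0 p (mem_filter.1 hp).1)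
            fun p hp => hg1 p (mem_filter.1 hp).1 (not_lt.1 (mem_filter.1 hp).2)
    _ ≤ M ^ N := by
        rw [mul_one]
        refine pow_le_pow_right₀ hM ((card_le_card fun p hp => ?_).trans (card_range N).le)
        exact mem_range.2 (mem_filter.1 hp).2

theorem card_le_rpow_mul_sum_rpow_neg {δ Y : ℝ} (hδ : 0 ≤ δ) {s : Finset ℕ}
    (hs : ∀ n ∈ s, 0 < n ∧ (n : ℝ) ≤ Y) :
    (#s : ℝ) ≤ Y ^ δ * ∑ n ∈ s, (n : ℝ) ^ (-δ) := by
  rw [card_eq_sum_ones, Nat.cast_sum, mul_sum]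
  refine sum_le_sum fun n hn => ?_
  have hn0 : (0 : ℝ) < n := by exact_mod_cast (hs n hn).1
  rw [Nat.cast_one, rpow_neg hn0.le, ← div_eq_mul_inv,
    ← div_rpow (hn0.le.trans (hs n hn).2) hn0.le]
  exact one_le_rpow ((one_le_div hn0).2 (hs n hn).2) hδ

@[simps]
noncomputable def natRpowNegHom (δ : ℝ) : ℕ →* ℝ where
  toFun n := (n : ℝ) ^ (-δ)
  map_one' := by simp
  map_mul' m n := by push_cast; exact mul_rpow m.cast_nonneg n.cast_nonneg

theorem sum_rpow_neg_le_prod_of_subset_factoredNumbers {δ : ℝ} (hδ : 0 < δ) {P s : Finset ℕ}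
    (hs : ∀ m ∈ s, m ∈ Nat.factoredNumbers P) :
    ∑ m ∈ s, (m : ℝ) ^ (-δ) ≤ ∏ p ∈ P with p.Prime, (1 - (p : ℝ) ^ (-δ))⁻¹ := by
  have hlt : ∀ {p : ℕ}, p.Prime → ‖natRpowNegHom δ p‖ < 1 := fun hp => by
    rw [natRpowNegHom_apply, Real.norm_of_nonneg (by positivity)]
    exact rpow_lt_one_of_one_lt_of_neg (by exact_mod_cast hp.one_lt) (neg_lt_zero.2 hδ)
  have hsum := (EulerProduct.summable_and_hasSum_factoredNumbers_prod_filter_prime_geometric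
    hlt P).2
  rw [← sum_subtype_of_mem _ hs]
  exact sum_le_hasSum _ (fun m _ => by positivity) hsum

theorem sum_rpow_neg_le_prod_of_primeFactors_eq {δ : ℝ} (hδ : 0 < δ) {r : ℕ} {s : Finset ℕ}
    (hs : ∀ n ∈ s, n ≠ 0 ∧ n.primeFactors = r.primeFactors) :
    ∑ n ∈ s, (n : ℝ) ^ (-δ) ≤ ∏ p ∈ r.primeFactors, ((p : ℝ) ^ δ - 1)⁻¹ := by
  set P := r.primeFactors
  set k := ∏ p ∈ P, p
  have hk_dvd : ∀ n ∈ s, k ∣ n := fun n hn => by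
    simpa only [(hs n hn).2] using n.prod_primeFactors_dvd
  have hk0 : k ≠ 0 := prod_ne_zero_iff.2 fun p hp => (Nat.prime_of_mem_primeFactors hp).ne_zero
  have hquot : ∀ m ∈ s.image (· / k), m ∈ Nat.factoredNumbers P := by
    simp only [mem_image, forall_exists_index, and_imp, forall_apply_eq_imp_iff₂]
    intro n hn
    refine Nat.mem_factoredNumbers_iff_primeFactors_subset.2 ⟨?_, ?_⟩
    · exact Nat.div_ne_zero_iff_of_dvd (hk_dvd n hn) |>.2 ⟨(hs n hn).1, hk0⟩
    · exact (hs n hn).2 ▸ Nat.primeFactors_mono (Nat.div_dvd_of_dvd (hk_dvd n hn)) (hs n hn).1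
  have hfactor : ∀ n ∈ s, (n : ℝ) ^ (-δ) = (k : ℝ) ^ (-δ) * ((n / k : ℕ) : ℝ) ^ (-δ) := by
    intro n hn
    rw [← mul_rpow k.cast_nonneg (Nat.cast_nonneg _), ← Nat.cast_mul,
      Nat.mul_div_cancel' (hk_dvd n hn)]
  calc ∑ n ∈ s, (n : ℝ) ^ (-δ) = (k : ℝ) ^ (-δ) * ∑ m ∈ s.image (· / k), (m : ℝ) ^ (-δ) := by
        rw [sum_image fun a ha b hb hab => (Nat.div_left_inj (hk_dvd a ha) (hk_dvd b hb)).1 hab,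
          mul_sum]
        exact sum_congr rfl hfactor
    _ ≤ (k : ℝ) ^ (-δ) * ∏ p ∈ P with p.Prime, (1 - (p : ℝ) ^ (-δ))⁻¹ := by
        gcongr
        exact sum_rpow_neg_le_prod_of_subset_factoredNumbers hδ hquot
    _ = ∏ p ∈ P, ((p : ℝ) ^ δ - 1)⁻¹ := by
        rw [filter_true_of_mem fun p hp => Nat.prime_of_mem_primeFactors hp, Nat.cast_prod,
          ← Real.finsetProd_rpow _ _ (fun p _ => Nat.cast_nonneg p), ← prod_mul_distrib]
        refine prod_congr rfl fun p hp => ?_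
        have hp : (1 : ℝ) < p := by exact_mod_cast (Nat.prime_of_mem_primeFactors hp).one_lt
        have hpδ : (1 : ℝ) < (p : ℝ) ^ δ := one_lt_rpow hp hδ
        rw [rpow_neg (by positivity)]
        field_simp

theorem exists_prod_rpow_sub_one_inv_le {δ : ℝ} (hδ : 0 < δ) :
    ∃ K : ℝ, 0 < K ∧ ∀ P : Finset ℕ, (∀ p ∈ P, p.Prime) →
      ∏ p ∈ P, ((p : ℝ) ^ δ - 1)⁻¹ ≤ K := by
  set M := max 1 ((2 : ℝ) ^ δ - 1)⁻¹
  have hM : 1 ≤ M := le_max_left _ _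
  refine ⟨M ^ ⌈(2 : ℝ) ^ δ⁻¹⌉₊, by positivity, fun P hP => ?_⟩
  have h2 : (1 : ℝ) < 2 ^ δ := one_lt_rpow one_lt_two hδ
  have h2p : ∀ p ∈ P, (2 : ℝ) ^ δ ≤ (p : ℝ) ^ δ := fun p hp =>
    rpow_le_rpow zero_le_two (by exact_mod_cast (hP p hp).two_le) hδ.le
  refine prod_le_pow_of_le_one_of_le hM P (fun p hp => ?_) (fun p hp => ?_) (fun p hp hNp => ?_)
  · exact inv_nonneg.2 (by linarith [h2p p hp])
  · exact le_max_of_le_right (inv_anti₀ (by linarith) (by linarith [h2p p hp]))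
  · have : (2 : ℝ) ≤ (p : ℝ) ^ δ :=
      calc (2 : ℝ) = ((2 : ℝ) ^ δ⁻¹) ^ δ := by
            rw [← rpow_mul zero_le_two, inv_mul_cancel₀ hδ.ne', rpow_one]
        _ ≤ (p : ℝ) ^ δ :=
            rpow_le_rpow (by positivity) ((Nat.le_ceil _).trans (by exact_mod_cast hNp)) hδ.le
    exact inv_le_one_of_one_le₀ (by linarith)

theorem exists_sum_rpow_neg_le_mul_of_radical_le {δ : ℝ} (hδ : 0 < δ) :
    ∃ K : ℝ, 0 < K ∧ ∀ X : ℝ, 0 ≤ X → ∀ s : Finset ℕ,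
      (∀ n ∈ s, 0 < n ∧ ((∏ p ∈ n.primeFactors, p : ℕ) : ℝ) ≤ X) →
        ∑ n ∈ s, (n : ℝ) ^ (-δ) ≤ K * X := by
  classical
  obtain ⟨K, hK0, hK⟩ := exists_prod_rpow_sub_one_inv_le hδ
  refine ⟨K, hK0, fun X hX s hs => ?_⟩
  set rad : ℕ → ℕ := fun n => ∏ p ∈ n.primeFactors, p
  have hrad : ∀ n, (rad n).primeFactors = n.primeFactors := fun n =>
    Nat.primeFactors_prod fun _ => Nat.prime_of_mem_primeFactors
  have hmaps : ∀ n ∈ s, rad n ∈ Icc 1 ⌊X⌋₊ := fun n hn => mem_Icc.2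
    ⟨prod_pos fun p hp => (Nat.prime_of_mem_primeFactors hp).pos, Nat.le_floor (hs n hn).2⟩
  have hfiber : ∀ r ∈ Icc 1 ⌊X⌋₊, ∑ n ∈ s with rad n = r, (n : ℝ) ^ (-δ) ≤ K := by
    intro r _
    refine (sum_rpow_neg_le_prod_of_primeFactors_eq hδ (r := r) fun n hn => ?_).trans
      (hK _ fun p hp => Nat.prime_of_mem_primeFactors hp)
    obtain ⟨hns, rfl⟩ := mem_filter.1 hn
    exact ⟨(hs n hns).1.ne', (hrad n).symm⟩
  calc ∑ n ∈ s, (n : ℝ) ^ (-δ)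
        = ∑ r ∈ Icc 1 ⌊X⌋₊, ∑ n ∈ s with rad n = r, (n : ℝ) ^ (-δ) :=
        (sum_fiberwise_of_maps_to hmaps _).symm
    _ ≤ ∑ _r ∈ Icc 1 ⌊X⌋₊, K := sum_le_sum hfiber
    _ ≤ K * X := by
        rw [sum_const, Nat.card_Icc, Nat.add_sub_cancel, nsmul_eq_mul, mul_comm]
        exact mul_le_mul_of_nonneg_left (Nat.floor_le hX) hK0.le

/-- The number of `n ≤ X^ν` whose squarefree kernel `∏_{p|n} p` is at most `X`
is `O(X^(1+ε))`. -/
theorem stmt_16 (ν : ℝ) (hν : 1 ≤ ν) (ε : ℝ) (hε : 0 < ε) :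
    ∃ C : ℝ, 0 < C ∧ ∀ X : ℝ, 1 ≤ X →
      (Nat.card {n : ℕ | 0 < n ∧ (n : ℝ) ≤ X ^ ν ∧
          ((∏ p ∈ n.primeFactors, p : ℕ) : ℝ) ≤ X} : ℝ)
        ≤ C * X ^ (1 + ε) := by
  have hδ : 0 < ε / ν := div_pos hε (by linarith)
  obtain ⟨K, hK0, hK⟩ := exists_sum_rpow_neg_le_mul_of_radical_le hδ
  refine ⟨K, hK0, fun X hX => ?_⟩
  have hX0 : 0 ≤ X := by linarith
  set S := {n ∈ Icc 1 ⌊X ^ ν⌋₊ | ((∏ p ∈ n.primeFactors, p : ℕ) : ℝ) ≤ X}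
  have hS : {n : ℕ | 0 < n ∧ (n : ℝ) ≤ X ^ ν ∧ ((∏ p ∈ n.primeFactors, p : ℕ) : ℝ) ≤ X}
      = ↑S := by
    ext n
    simp [S, Nat.one_le_iff_ne_zero, Nat.le_floor_iff (rpow_nonneg hX0 ν), Nat.pos_iff_ne_zero,
      and_assoc]
  have hmem : ∀ n ∈ S, 0 < n ∧ (n : ℝ) ≤ X ^ ν ∧ ((∏ p ∈ n.primeFactors, p : ℕ) : ℝ) ≤ X :=
    fun n hn => by rwa [← mem_coe, ← hS] at hn
  rw [hS, Nat.card_coe_set_eq, Set.ncard_coe_finset]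
  calc (#S : ℝ) ≤ (X ^ ν) ^ (ε / ν) * ∑ n ∈ S, (n : ℝ) ^ (-(ε / ν)) :=
        card_le_rpow_mul_sum_rpow_neg hδ.le fun n hn => ⟨(hmem n hn).1, (hmem n hn).2.1⟩
    _ ≤ X ^ ε * (K * X) := by
        rw [← rpow_mul hX0, mul_div_cancel₀ _ (by linarith)]
        exact mul_le_mul_of_nonneg_left
          (hK X hX0 S fun n hn => ⟨(hmem n hn).1, (hmem n hn).2.2⟩) (by positivity)
    _ = K * X ^ (1 + ε) := by rw [rpow_add (by linarith), rpow_one]; ring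
end
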